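/- arXiv:2311.10179 — 6 statements merged into one kernel-verified Lean document; each statement's English description precedes it below -/
import Mathlib

section
/- Let 𝒩 be a nonempty subset of the positive semidefinite Hermitian q×q matrices which is totally ordered and bounded above with respect to the Loewner order ⪰. Then there exist a positive semidefinite Hermitian matrix N₀ and a sequence (Nₙ) of elements of 𝒩 such that N₀ ⪰ N for all N ∈ 𝒩 and Nₙ → N₀ in the norm topology. -/
/-!
On a Loewner chain the real part of the trace is strictly monotone: comparable matrices with
equal trace coincide, because a positive semidefinite matrix of trace zero vanishes. Since the
entries of a positive semidefinite matrix are bounded by its trace, the entries of chain elements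
are `1`-Lipschitz functions of the trace.

If the supremum `s` of the traces over `𝒩` is attained, the maximizer is the greatest element of
`𝒩`. Otherwise take `Nₙ ∈ 𝒩` with traces tending to `s`: the sequence is entrywise Cauchy, and
every element of `𝒩` has trace below `s`, hence lies below `Nₙ` for large `n`. The limit `N₀`
dominates `𝒩` because the positive semidefinite cone is closed.
-/

open scoped ComplexOrder
open Filter Topology

lemma CauchySeq.of_dist_le_dist {α β : Type*} [PseudoMetricSpace α] [PseudoMetricSpace β]
    {f : ℕ → α} {g : ℕ → β} (hg : CauchySeq g) (h : ∀ m n, dist (f m) (f n) ≤ dist (g m) (g n)) :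
    CauchySeq f :=
  Metric.cauchySeq_iff.2 fun ε hε =>
    (Metric.cauchySeq_iff.1 hg ε hε).imp fun _ hK m hm n hn => (h m n).trans_lt (hK m hm n hn)

namespace Matrix

variable {n 𝕜 : Type*} [RCLike 𝕜]

-- Nonnegativity of the `2 × 2` principal minor on the indices `i, j`.
theorem PosSemidef.norm_apply_sq_le {M : Matrix n n 𝕜} (hM : M.PosSemidef) (i j : n) :
    ‖M i j‖ ^ 2 ≤ RCLike.re (M i i) * RCLike.re (M j j) := by
  have hdet := (hM.submatrix ![i, j]).det_nonneg
  rw [det_fin_two] at hdet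
  simp only [submatrix_apply, cons_val_zero, cons_val_one] at hdet
  have hi := (RCLike.nonneg_iff.1 (hM.diag_nonneg (i := i))).2
  have hj := (RCLike.nonneg_iff.1 (hM.diag_nonneg (i := j))).2
  have hre := (RCLike.nonneg_iff.1 hdet).1
  rw [← (hM.1.apply j i : star (M i j) = M j i), RCLike.star_def, RCLike.mul_conj, map_sub,
    RCLike.mul_re, hi, hj] at hre
  simp only [mul_zero, sub_zero, ← RCLike.ofReal_pow, RCLike.ofReal_re] at hre
  linarith

variable [Fintype n]

theorem isClosed_setOf_posSemidef : IsClosed {M : Matrix n n 𝕜 | M.PosSemidef} := by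
  simp only [posSemidef_iff_dotProduct_mulVec, Set.ofPred_and, Set.ofPred_forall]
  refine (isClosed_eq continuous_id.matrix_conjTranspose continuous_id).inter
    (isClosed_iInter fun x => isClosed_le continuous_const ?_)
  exact continuous_const.dotProduct (continuous_id.matrix_mulVec continuous_const)

namespace PosSemidef

variable {M : Matrix n n 𝕜}

theorem re_trace_nonneg (hM : M.PosSemidef) : 0 ≤ RCLike.re M.trace :=
  (RCLike.nonneg_iff.1 hM.trace_nonneg).1

theorem eq_zero_of_re_trace_le_zero (hM : M.PosSemidef) (h : RCLike.re M.trace ≤ 0) : M = 0 := by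
  refine hM.trace_eq_zero_iff.1 ?_
  rw [← RCLike.re_add_im M.trace, (RCLike.nonneg_iff.1 hM.trace_nonneg).2,
    le_antisymm h hM.re_trace_nonneg]
  simp

theorem re_apply_le_re_trace (hM : M.PosSemidef) (i : n) :
    RCLike.re (M i i) ≤ RCLike.re M.trace := by
  rw [trace, map_sum]
  exact Finset.single_le_sum (fun j _ => (RCLike.nonneg_iff.1 (hM.diag_nonneg (i := j))).1)
    (Finset.mem_univ i)

theorem norm_apply_le_re_trace (hM : M.PosSemidef) (i j : n) :
    ‖M i j‖ ≤ RCLike.re M.trace := by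
  have hj := (RCLike.nonneg_iff.1 (hM.diag_nonneg (i := j))).1
  refine (pow_le_pow_iff_left₀ (norm_nonneg _) hM.re_trace_nonneg two_ne_zero).1 ?_
  calc ‖M i j‖ ^ 2 ≤ RCLike.re (M i i) * RCLike.re (M j j) := hM.norm_apply_sq_le i j
    _ ≤ RCLike.re M.trace ^ 2 := by
      rw [sq]
      exact mul_le_mul (hM.re_apply_le_re_trace i) (hM.re_apply_le_re_trace j) hj
        hM.re_trace_nonneg

end PosSemidef

variable {A B : Matrix n n 𝕜}

theorem re_trace_le_of_posSemidef_sub (h : (B - A).PosSemidef) :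
    RCLike.re A.trace ≤ RCLike.re B.trace := by
  simpa [trace_sub] using h.re_trace_nonneg

theorem posSemidef_sub_of_re_trace_le (hAB : (B - A).PosSemidef ∨ (A - B).PosSemidef)
    (h : RCLike.re A.trace ≤ RCLike.re B.trace) : (B - A).PosSemidef := by
  rcases hAB with hBA | hAB
  · exact hBA
  · have hzero : A - B = 0 := hAB.eq_zero_of_re_trace_le_zero (by simpa [trace_sub] using h)
    rw [← neg_sub, hzero, neg_zero]
    exact .zero

theorem norm_apply_sub_apply_le (hAB : (A - B).PosSemidef ∨ (B - A).PosSemidef) (i j : n) :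
    ‖A i j - B i j‖ ≤ |RCLike.re A.trace - RCLike.re B.trace| := by
  rcases hAB with hAB | hBA
  · simpa [trace_sub] using (hAB.norm_apply_le_re_trace i j).trans (le_abs_self _)
  · simpa [norm_sub_rev, abs_sub_comm, trace_sub] using
      (hBA.norm_apply_le_re_trace i j).trans (le_abs_self _)

theorem exists_tendsto_of_cauchySeq_re_trace {u : ℕ → Matrix n n 𝕜}
    (hu : ∀ k l, (u k - u l).PosSemidef ∨ (u l - u k).PosSemidef)
    (ht : CauchySeq fun k => RCLike.re (u k).trace) : ∃ L, Tendsto u atTop (𝓝 L) := by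
  have hcauchy (i j : n) : CauchySeq fun k => u k i j :=
    ht.of_dist_le_dist fun k l => by
      simpa only [dist_eq_norm, Real.norm_eq_abs] using norm_apply_sub_apply_le (hu k l) i j
  choose L hL using fun i j => cauchySeq_tendsto_of_complete (hcauchy i j)
  exact ⟨of L, tendsto_pi_nhds.2 fun i => tendsto_pi_nhds.2 fun j => hL i j⟩

end Matrix

open Matrix

/-- Let `𝒩` be a nonempty subset of the positive semidefinite Hermitian `q × q` matrices which
is totally ordered and bounded above with respect to the Loewner order `⪰`.  Then there exist a
positive semidefinite matrix `N₀` and a sequence `(Nₙ)` of elements of `𝒩` such that `N₀ ⪰ N`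
for all `N ∈ 𝒩` and `Nₙ → N₀` in the norm topology. -/
theorem exists_upperBound_limit_of_totallyOrdered_psd {q : ℕ}
    (N : Set (Matrix (Fin q) (Fin q) ℂ)) (hne : N.Nonempty)
    (hpsd : ∀ A ∈ N, A.PosSemidef)
    (htot : ∀ A ∈ N, ∀ B ∈ N, (A - B).PosSemidef ∨ (B - A).PosSemidef)
    (hbdd : ∃ C : Matrix (Fin q) (Fin q) ℂ, ∀ A ∈ N, (C - A).PosSemidef) :
    ∃ N₀ : Matrix (Fin q) (Fin q) ℂ, N₀.PosSemidef ∧ (∀ A ∈ N, (N₀ - A).PosSemidef) ∧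
      ∃ u : ℕ → Matrix (Fin q) (Fin q) ℂ, (∀ n, u n ∈ N) ∧
        Filter.Tendsto u Filter.atTop (nhds N₀) := by
  let t : Matrix (Fin q) (Fin q) ℂ → ℝ := fun A => RCLike.re A.trace
  by_cases hmax : ∃ A ∈ N, ∀ B ∈ N, t B ≤ t A
  · obtain ⟨A, hA, hAmax⟩ := hmax
    exact ⟨A, hpsd A hA, fun B hB => posSemidef_sub_of_re_trace_le (htot A hA B hB) (hAmax B hB),
      fun _ => A, fun _ => hA, tendsto_const_nhds⟩
  push Not at hmax
  obtain ⟨C, hC⟩ := hbdd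
  have hbdd : BddAbove (t '' N) := ⟨t C, Set.forall_mem_image.2 fun A hA =>
    re_trace_le_of_posSemidef_sub (hC A hA)⟩
  obtain ⟨v, -, hv, hvN⟩ := exists_seq_tendsto_sSup (hne.image t) hbdd
  choose u huN hut using hvN
  obtain ⟨N₀, hlim⟩ := exists_tendsto_of_cauchySeq_re_trace (fun k l => htot _ (huN k) _ (huN l))
    (by simpa only [t, hut] using hv.cauchySeq)
  have hbelow (A : Matrix (Fin q) (Fin q) ℂ) (hA : A ∈ N) :
      ∀ᶠ k in atTop, (u k - A).PosSemidef := by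
    obtain ⟨B, hB, hAB⟩ := hmax A hA
    filter_upwards [hv.eventually_const_lt (hAB.trans_le (le_csSup hbdd ⟨B, hB, rfl⟩))] with k hk
    exact posSemidef_sub_of_re_trace_le (htot _ (huN k) A hA) ((hut k).symm ▸ hk).le
  exact ⟨N₀, isClosed_setOf_posSemidef.mem_of_tendsto hlim (.of_forall fun k => hpsd _ (huN k)),
    fun A hA => isClosed_setOf_posSemidef.mem_of_tendsto (hlim.sub_const A) (hbelow A hA),
    u, huN, hlim⟩
end

section
/- Assume condition (PC): every linear functional on ℰ that is nonnegative on ℰ_⪰ is a moment functional. Assume also there are e ∈ ℰ and ε > 0 with e(x) ⪰ εI_q on 𝒳. Let Λ be a moment functional on ℰ, x₀ ∈ 𝒳, and Y a positive semidefinite Hermitian q×q matrix. Then there exists a representing measure μ of Λ with μ({x₀}) ⪰ Y if and only if tr(F(x₀)Y) ≤ Λ(F) for all F ∈ ℰ_⪰. -/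
open Matrix
open scoped ComplexOrder

variable {X : Type*} {q : ℕ}

/-- `μ` is a (finitely atomic) representing measure of the linear functional `Λ`. -/
def IsRepMeasure (E : Submodule ℝ (X → Matrix (Fin q) (Fin q) ℂ)) (Λ : E →ₗ[ℝ] ℝ)
    (μ : X →₀ Matrix (Fin q) (Fin q) ℂ) : Prop :=
  (∀ x, (μ x).PosSemidef) ∧
    ∀ F : E, Λ F = μ.sum fun x M => (((F : X → Matrix (Fin q) (Fin q) ℂ) x) * M).trace.re

namespace Matrix.PosSemidef

variable {n 𝕜 : Type*} [Fintype n] [RCLike 𝕜] {A B C : Matrix n n 𝕜}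

open scoped MatrixOrder in
theorem trace_mul_nonneg (hA : A.PosSemidef) (hB : B.PosSemidef) : 0 ≤ (A * B).trace := by
  classical
  obtain ⟨D, rfl⟩ := CStarAlgebra.nonneg_iff_eq_star_mul_self.mp hB.nonneg
  rw [star_eq_conjTranspose, ← Matrix.mul_assoc, trace_mul_comm, ← Matrix.mul_assoc]
  exact (hA.mul_mul_conjTranspose_same D).trace_nonneg

theorem re_trace_mul_nonneg (hA : A.PosSemidef) (hB : B.PosSemidef) :
    0 ≤ RCLike.re (A * B).trace :=
  (RCLike.nonneg_iff.mp (hA.trace_mul_nonneg hB)).1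

theorem re_trace_mul_le_of_posSemidef_sub (hA : A.PosSemidef) (hBC : (B - C).PosSemidef) :
    RCLike.re (A * C).trace ≤ RCLike.re (A * B).trace := by
  have := hA.re_trace_mul_nonneg hBC
  rwa [Matrix.mul_sub, trace_sub, map_sub, sub_nonneg] at this

end Matrix.PosSemidef

section RepresentingMeasure

variable (E : Submodule ℝ (X → Matrix (Fin q) (Fin q) ℂ))

def diracFunctional (x : X) (M : Matrix (Fin q) (Fin q) ℂ) : E →ₗ[ℝ] ℝ where
  toFun F := (((F : X → Matrix (Fin q) (Fin q) ℂ) x) * M).trace.re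
  map_add' F G := by simp [Matrix.add_mul, trace_add]
  map_smul' r F := by simp [trace_smul]

variable {E}

theorem isRepMeasure_single (x : X) {M : Matrix (Fin q) (Fin q) ℂ} (hM : M.PosSemidef) :
    IsRepMeasure E (diracFunctional E x M) (Finsupp.single x M) := by
  classical
  refine ⟨fun y => ?_, fun F => ?_⟩
  · rw [Finsupp.single_apply]
    split_ifs
    exacts [hM, .zero]
  · simp [diracFunctional]

theorem IsRepMeasure.add {Λ₁ Λ₂ : E →ₗ[ℝ] ℝ} {μ₁ μ₂ : X →₀ Matrix (Fin q) (Fin q) ℂ}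
    (h₁ : IsRepMeasure E Λ₁ μ₁) (h₂ : IsRepMeasure E Λ₂ μ₂) :
    IsRepMeasure E (Λ₁ + Λ₂) (μ₁ + μ₂) := by
  refine ⟨fun x => (h₁.1 x).add (h₂.1 x), fun F => ?_⟩
  rw [LinearMap.add_apply, h₁.2, h₂.2, Finsupp.sum_add_index' (by simp)]
  intro x M N
  simp [Matrix.mul_add, trace_add]

theorem IsRepMeasure.re_trace_mul_apply_le {Λ : E →ₗ[ℝ] ℝ} {μ : X →₀ Matrix (Fin q) (Fin q) ℂ}
    (hμ : IsRepMeasure E Λ μ) {F : E}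
    (hF : ∀ x, ((F : X → Matrix (Fin q) (Fin q) ℂ) x).PosSemidef) (x : X) :
    (((F : X → Matrix (Fin q) (Fin q) ℂ) x) * μ x).trace.re ≤ Λ F := by
  classical
  rw [hμ.2, Finsupp.sum_of_support_subset μ (Finset.subset_insert x μ.support) _ (by simp)]
  exact Finset.single_le_sum (fun y _ => (hF y).re_trace_mul_nonneg (hμ.1 y))
    (Finset.mem_insert_self x μ.support)

end RepresentingMeasure

theorem penumbra_mem_iff_general (E : Submodule ℝ (X → Matrix (Fin q) (Fin q) ℂ))
    (hPC : ∀ Λ' : E →ₗ[ℝ] ℝ,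
      (∀ F : E, (∀ x, ((F : X → Matrix (Fin q) (Fin q) ℂ) x).PosSemidef) → 0 ≤ Λ' F) →
      ∃ μ, IsRepMeasure E Λ' μ)
    (Λ : E →ₗ[ℝ] ℝ) (x₀ : X)
    (Y : Matrix (Fin q) (Fin q) ℂ) (hY : Y.PosSemidef) :
    (∃ μ, IsRepMeasure E Λ μ ∧ ((μ x₀) - Y).PosSemidef) ↔
      ∀ F : E, (∀ x, ((F : X → Matrix (Fin q) (Fin q) ℂ) x).PosSemidef) →
        (((F : X → Matrix (Fin q) (Fin q) ℂ) x₀) * Y).trace.re ≤ Λ F := by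
  constructor
  · rintro ⟨μ, hμ, hY_le⟩ F hF
    exact ((hF x₀).re_trace_mul_le_of_posSemidef_sub hY_le).trans
      (hμ.re_trace_mul_apply_le hF x₀)
  · intro hle
    -- `Λ - tr(· Y) δ_{x₀}` is positive, so (PC) represents it; add back the atom `Y δ_{x₀}`.
    obtain ⟨ν, hν⟩ := hPC (Λ - diracFunctional E x₀ Y) fun F hF => sub_nonneg.mpr (hle F hF)
    refine ⟨ν + Finsupp.single x₀ Y, sub_add_cancel Λ _ ▸ hν.add (isRepMeasure_single x₀ hY), ?_⟩
    simpa using hν.1 x₀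

/-- Assume condition (PC):  every linear functional on `ℰ` that is nonnegative on `ℰ_⪰` is a
moment functional; and assume there are `e ∈ ℰ`, `ε > 0` with `e(x) ⪰ ε I` on `𝒳`.  Let `Λ` be
a moment functional on `ℰ`, `x₀ ∈ 𝒳`, and `Y ⪰ 0`.  Then there is a representing measure `μ`
of `Λ` with `μ({x₀}) ⪰ Y` if and only if `tr(F(x₀) Y) ≤ Λ(F)` for all `F ∈ ℰ_⪰`. -/
theorem penumbra_mem_iff (E : Submodule ℝ (X → Matrix (Fin q) (Fin q) ℂ))
    (hfin : FiniteDimensional ℝ E)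
    (hherm : ∀ F ∈ E, ∀ x, Matrix.IsHermitian (F x))
    (hPC : ∀ Λ' : E →ₗ[ℝ] ℝ,
      (∀ F : E, (∀ x, ((F : X → Matrix (Fin q) (Fin q) ℂ) x).PosSemidef) → 0 ≤ Λ' F) →
      ∃ μ, IsRepMeasure E Λ' μ)
    (e : E) (ε : ℝ) (hε : 0 < ε)
    (he : ∀ x, (((e : X → Matrix (Fin q) (Fin q) ℂ) x) - ε • (1 : Matrix (Fin q) (Fin q) ℂ)).PosSemidef)
    (Λ : E →ₗ[ℝ] ℝ) (hΛ : ∃ μ, IsRepMeasure E Λ μ) (x₀ : X)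
    (Y : Matrix (Fin q) (Fin q) ℂ) (hY : Y.PosSemidef) :
    (∃ μ, IsRepMeasure E Λ μ ∧ ((μ x₀) - Y).PosSemidef) ↔
      ∀ F : E, (∀ x, ((F : X → Matrix (Fin q) (Fin q) ℂ) x).PosSemidef) →
        (((F : X → Matrix (Fin q) (Fin q) ℂ) x₀) * Y).trace.re ≤ Λ F :=
  penumbra_mem_iff_general E hPC Λ x₀ Y hY
end

section
/- Assume condition (PC) and the existence of e ∈ ℰ, ε > 0 with e(x) ⪰ εI_q on 𝒳. Let Λ be a moment functional, x₀ ∈ 𝒳, and M a positive semidefinite matrix with tr(F(x₀)M) ≤ Λ(F) for all F ∈ ℰ_⪰. Suppose M is maximal for this property: whenever M' ⪰ M and tr(F(x₀)M') ≤ Λ(F) for all F ∈ ℰ_⪰, then M' = M. Then M is the mass at x₀ of some representing measure of Λ. -/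
open Matrix
open scoped ComplexOrder

variable {X : Type*} {q : ℕ}

/-!
Subtracting the point mass `M δ_{x₀}` from `Λ` leaves a functional that is nonnegative on `ℰ_⪰`,
so by (PC) it has a representing measure `ν`, and `ν + M δ_{x₀}` represents `Λ`. Its mass at `x₀`
is `ν(x₀) + M ⪰ M`, which again lies below `Λ` on `ℰ_⪰`; maximality of `M` forces `ν(x₀) = 0`.
-/

open scoped MatrixOrder Matrix.Norms.L2Operator in
lemma Matrix.PosSemidef.re_trace_mul_nonneg_s7 {n 𝕜 : Type*} [Fintype n] [RCLike 𝕜]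
    {A B : Matrix n n 𝕜} (hA : A.PosSemidef) (hB : B.PosSemidef) :
    0 ≤ RCLike.re (A * B).trace := by
  classical
  obtain ⟨C, rfl⟩ := CStarAlgebra.nonneg_iff_eq_star_mul_self.mp hB.nonneg
  rw [star_eq_conjTranspose, ← Matrix.mul_assoc, trace_mul_cycle]
  exact (RCLike.nonneg_iff.mp (hA.mul_mul_conjTranspose_same C).trace_nonneg).1

section RepresentingMeasure

variable (E : Submodule ℝ (X → Matrix (Fin q) (Fin q) ℂ))

def pointMassFunctional (x₀ : X) (M : Matrix (Fin q) (Fin q) ℂ) : E →ₗ[ℝ] ℝ where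
  toFun F := (((F : X → Matrix (Fin q) (Fin q) ℂ) x₀) * M).trace.re
  map_add' F G := by simp [Matrix.add_mul]
  map_smul' c F := by simp

variable {E}

lemma pointMassFunctional_add_right (x₀ : X) (M N : Matrix (Fin q) (Fin q) ℂ) :
    pointMassFunctional E x₀ (M + N) =
      pointMassFunctional E x₀ M + pointMassFunctional E x₀ N := by
  ext F
  simp [pointMassFunctional, Matrix.mul_add]

lemma IsRepMeasure.add_single {Λ : E →ₗ[ℝ] ℝ} {ν : X →₀ Matrix (Fin q) (Fin q) ℂ}
    (hν : IsRepMeasure E Λ ν) {x₀ : X} {M : Matrix (Fin q) (Fin q) ℂ} (hM : M.PosSemidef) :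
    IsRepMeasure E (Λ + pointMassFunctional E x₀ M) (ν + Finsupp.single x₀ M) := by
  refine ⟨fun x => ?_, fun F => ?_⟩
  · rw [Finsupp.add_apply]
    exact (hν.1 x).add (by rcases eq_or_ne x₀ x with rfl | h <;> simp [*, PosSemidef.zero])
  · rw [Finsupp.sum_add_index' (by simp) (by simp [Matrix.mul_add]),
      Finsupp.sum_single_index (by simp), ← hν.2 F]
    rfl

lemma IsRepMeasure.pointMassFunctional_le {Λ : E →ₗ[ℝ] ℝ} {ν : X →₀ Matrix (Fin q) (Fin q) ℂ}
    (hν : IsRepMeasure E Λ ν) (x₀ : X) {F : E}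
    (hF : ∀ x, ((F : X → Matrix (Fin q) (Fin q) ℂ) x).PosSemidef) :
    pointMassFunctional E x₀ (ν x₀) F ≤ Λ F := by
  have hterm (x : X) : 0 ≤ (((F : X → Matrix (Fin q) (Fin q) ℂ) x) * ν x).trace.re :=
    (hF x).re_trace_mul_nonneg_s7 (hν.1 x)
  rw [hν.2 F]
  by_cases hx : x₀ ∈ ν.support
  · exact Finset.single_le_sum (fun x _ => hterm x) hx
  · simpa [pointMassFunctional, Finsupp.notMem_support_iff.mp hx, Finsupp.sum] using
      Finset.sum_nonneg fun x _ => hterm x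

end RepresentingMeasure

theorem maximal_mass_attained_general (E : Submodule ℝ (X → Matrix (Fin q) (Fin q) ℂ))
    (hPC : ∀ Λ' : E →ₗ[ℝ] ℝ,
      (∀ F : E, (∀ x, ((F : X → Matrix (Fin q) (Fin q) ℂ) x).PosSemidef) → 0 ≤ Λ' F) →
      ∃ μ, IsRepMeasure E Λ' μ)
    (Λ : E →ₗ[ℝ] ℝ) (x₀ : X)
    (M : Matrix (Fin q) (Fin q) ℂ) (hM : M.PosSemidef)
    (hMdom : ∀ F : E, (∀ x, ((F : X → Matrix (Fin q) (Fin q) ℂ) x).PosSemidef) →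
      (((F : X → Matrix (Fin q) (Fin q) ℂ) x₀) * M).trace.re ≤ Λ F)
    (hMmax : ∀ M' : Matrix (Fin q) (Fin q) ℂ, M'.PosSemidef → (M' - M).PosSemidef →
      (∀ F : E, (∀ x, ((F : X → Matrix (Fin q) (Fin q) ℂ) x).PosSemidef) →
        (((F : X → Matrix (Fin q) (Fin q) ℂ) x₀) * M').trace.re ≤ Λ F) → M' = M) :
    ∃ μ, IsRepMeasure E Λ μ ∧ μ x₀ = M := by
  set T := pointMassFunctional E x₀ M
  obtain ⟨ν, hν⟩ := hPC (Λ - T) fun F hF => sub_nonneg.2 (hMdom F hF)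
  have hν_add : ν x₀ + M = M := by
    refine hMmax _ ((hν.1 x₀).add hM) (by simpa using hν.1 x₀) fun F hF => ?_
    have hle := hν.pointMassFunctional_le x₀ hF
    rw [LinearMap.sub_apply] at hle
    change pointMassFunctional E x₀ (ν x₀ + M) F ≤ Λ F
    rw [pointMassFunctional_add_right, LinearMap.add_apply]
    linarith
  refine ⟨ν + Finsupp.single x₀ M, sub_add_cancel Λ T ▸ hν.add_single hM, ?_⟩
  rw [Finsupp.add_apply, Finsupp.single_eq_same, hν_add]

/-- Assume condition (PC) and the existence of `e ∈ ℰ`, `ε > 0` with `e(x) ⪰ ε I` on `𝒳`.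
Let `Λ` be a moment functional, `x₀ ∈ 𝒳`, and `M ⪰ 0` with `tr(F(x₀) M) ≤ Λ(F)` for all
`F ∈ ℰ_⪰`, and suppose `M` is maximal for this property.  Then `M` is the mass at `x₀` of
some representing measure of `Λ`. -/
theorem maximal_mass_attained (E : Submodule ℝ (X → Matrix (Fin q) (Fin q) ℂ))
    (hfin : FiniteDimensional ℝ E)
    (hherm : ∀ F ∈ E, ∀ x, Matrix.IsHermitian (F x))
    (hPC : ∀ Λ' : E →ₗ[ℝ] ℝ,
      (∀ F : E, (∀ x, ((F : X → Matrix (Fin q) (Fin q) ℂ) x).PosSemidef) → 0 ≤ Λ' F) →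
      ∃ μ, IsRepMeasure E Λ' μ)
    (e : E) (ε : ℝ) (hε : 0 < ε)
    (he : ∀ x, (((e : X → Matrix (Fin q) (Fin q) ℂ) x) - ε • (1 : Matrix (Fin q) (Fin q) ℂ)).PosSemidef)
    (Λ : E →ₗ[ℝ] ℝ) (hΛ : ∃ μ, IsRepMeasure E Λ μ) (x₀ : X)
    (M : Matrix (Fin q) (Fin q) ℂ) (hM : M.PosSemidef)
    (hMdom : ∀ F : E, (∀ x, ((F : X → Matrix (Fin q) (Fin q) ℂ) x).PosSemidef) →
      (((F : X → Matrix (Fin q) (Fin q) ℂ) x₀) * M).trace.re ≤ Λ F)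
    (hMmax : ∀ M' : Matrix (Fin q) (Fin q) ℂ, M'.PosSemidef → (M' - M).PosSemidef →
      (∀ F : E, (∀ x, ((F : X → Matrix (Fin q) (Fin q) ℂ) x).PosSemidef) →
        (((F : X → Matrix (Fin q) (Fin q) ℂ) x₀) * M').trace.re ≤ Λ F) → M' = M) :
    ∃ μ, IsRepMeasure E Λ μ ∧ μ x₀ = M :=
  maximal_mass_attained_general E hPC Λ x₀ M hM hMdom hMmax
end

section
/- Let Λ be a moment functional on the Hermitian matrix polynomials H_q(E) having a finitely atomic representing measure ν = M₀δ_{x₀} + Σ_{j=1}^k M_jδ_{x_j}. Suppose there exists f ∈ E with f(x) ≥ 0 for all x ∈ 𝒳, f(x₀) > 0 and f(x₁) = … = f(x_k) = 0. Then M₀ is the largest mass of Λ at x₀: every representing measure μ of Λ satisfies μ({x₀}) ⪯ M₀. -/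
open Matrix
open scoped ComplexOrder

variable {X : Type*} {q : ℕ}

/-- The set `H_q(E)` of Hermitian `q × q` matrix functions with entries from `E + iE`. -/
def HqESet (E : Submodule ℝ (X → ℝ)) (q : ℕ) : Set (X → Matrix (Fin q) (Fin q) ℂ) :=
  {F | (∀ x, (F x).IsHermitian) ∧
    ∀ i j : Fin q, ∃ g ∈ E, ∃ h ∈ E, ∀ x, F x i j = (g x : ℂ) + (h x : ℂ) * Complex.I}

/- The test function `y ↦ f y • v vᴴ` turns `Λ` into `∫ f ⟨μ v, v⟩`; since `f` vanishes at the
other atoms of `ν` and is nonnegative everywhere, comparing the two representations gives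
`f(x₀) ⟨μ({x₀}) v, v⟩ ≤ f(x₀) ⟨M₀ v, v⟩` for every vector `v`. -/

theorem Finsupp.apply_le_sum_of_nonneg {α M N : Type*} [Zero M] [AddCommMonoid N]
    [PartialOrder N] [IsOrderedAddMonoid N] (f : α →₀ M) {g : α → M → N}
    (hg : ∀ a, 0 ≤ g a (f a)) {a : α} (ha : g a 0 = 0) : g a (f a) ≤ f.sum g := by
  by_cases hfa : f a = 0
  · rw [hfa, ha]
    exact Finsupp.sum_nonneg' hg
  · exact Finset.single_le_sum (fun i _ => hg i) (Finsupp.mem_support_iff.mpr hfa)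

namespace Matrix

variable {n : Type*} [Fintype n]

theorem trace_vecMulVec_mul {R : Type*} [CommSemiring R] (v w : n → R)
    (N : Matrix n n R) : (vecMulVec v w * N).trace = w ⬝ᵥ N *ᵥ v := by
  rw [vecMulVec_mul, trace_vecMulVec, dotProduct_comm, dotProduct_mulVec]

theorem re_trace_smul_vecMulVec_star_mul (c : ℝ) (v : n → ℂ)
    (N : Matrix n n ℂ) :
    ((c • vecMulVec v (star v)) * N).trace.re = c * (star v ⬝ᵥ N *ᵥ v).re := by
  rw [smul_mul, trace_smul, trace_vecMulVec_mul, Complex.smul_re, smul_eq_mul]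

theorem PosSemidef.re_dotProduct_mulVec_nonneg {N : Matrix n n ℂ}
    (hN : N.PosSemidef) (v : n → ℂ) : 0 ≤ (star v ⬝ᵥ N *ᵥ v).re :=
  (Complex.nonneg_iff.mp (hN.dotProduct_mulVec_nonneg v)).1

theorem IsHermitian.posSemidef_sub_of_re_le {𝕜 : Type*} [RCLike 𝕜]
    {A B : Matrix n n 𝕜} (hA : A.IsHermitian) (hB : B.IsHermitian)
    (h : ∀ v, RCLike.re (star v ⬝ᵥ B *ᵥ v) ≤ RCLike.re (star v ⬝ᵥ A *ᵥ v)) :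
    (A - B).PosSemidef := by
  refine .of_dotProduct_mulVec_nonneg (hA.sub hB) fun v => ?_
  rw [sub_mulVec, dotProduct_sub, RCLike.nonneg_iff, map_sub, map_sub,
    hA.im_star_dotProduct_mulVec_self, hB.im_star_dotProduct_mulVec_self, sub_self]
  exact ⟨sub_nonneg.mpr (h v), rfl⟩

end Matrix

theorem smul_mem_HqESet {E : Submodule ℝ (X → ℝ)} {f : X → ℝ} (hfE : f ∈ E)
    {A : Matrix (Fin q) (Fin q) ℂ} (hA : A.IsHermitian) :
    (fun y => f y • A) ∈ HqESet E q := by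
  refine ⟨fun y => hA.smul (IsSelfAdjoint.all (f y)), fun i j => ?_⟩
  refine ⟨(A i j).re • f, E.smul_mem _ hfE, (A i j).im • f, E.smul_mem _ hfE, fun y => ?_⟩
  apply Complex.ext <;> simp [mul_comm]

theorem largest_mass_of_separating_function_general (E : Submodule ℝ (X → ℝ))
    (Λ : (X → Matrix (Fin q) (Fin q) ℂ) → ℝ)
    (k : ℕ) (x : Fin (k + 1) → X)
    (M : Fin (k + 1) → Matrix (Fin q) (Fin q) ℂ) (hM : ∀ j, (M j).PosSemidef)
    (hν : ∀ F ∈ HqESet E q, Λ F = ∑ j, ((F (x j)) * (M j)).trace.re)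
    (f : X → ℝ) (hfE : f ∈ E) (hf0 : ∀ y, 0 ≤ f y)
    (hfx0 : 0 < f (x 0)) (hfz : ∀ j, j ≠ 0 → f (x j) = 0)
    (μ : X →₀ Matrix (Fin q) (Fin q) ℂ) (hμpsd : ∀ y, (μ y).PosSemidef)
    (hμ : ∀ F ∈ HqESet E q, Λ F = μ.sum fun y N => ((F y) * N).trace.re) :
    (M 0 - μ (x 0)).PosSemidef := by
  refine (hM 0).1.posSemidef_sub_of_re_le (hμpsd (x 0)).1 fun v => ?_
  set F : X → Matrix (Fin q) (Fin q) ℂ := fun y => f y • vecMulVec v (star v)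
  have hF : F ∈ HqESet E q := smul_mem_HqESet hfE (posSemidef_vecMulVec_self_star v).1
  have hΛν : Λ F = f (x 0) * (star v ⬝ᵥ M 0 *ᵥ v).re := by
    rw [hν F hF, Fintype.sum_eq_single 0 fun j hj => by
      rw [re_trace_smul_vecMulVec_star_mul, hfz j hj, zero_mul]]
    exact re_trace_smul_vecMulVec_star_mul _ _ _
  have hΛμ : f (x 0) * (star v ⬝ᵥ μ (x 0) *ᵥ v).re ≤ Λ F := by
    have hterm (y : X) : 0 ≤ (F y * μ y).trace.re := by
      rw [re_trace_smul_vecMulVec_star_mul]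
      exact mul_nonneg (hf0 y) ((hμpsd y).re_dotProduct_mulVec_nonneg v)
    rw [hμ F hF, ← re_trace_smul_vecMulVec_star_mul]
    exact μ.apply_le_sum_of_nonneg (g := fun y N => (F y * N).trace.re) hterm (by simp)
  exact le_of_mul_le_mul_left (hΛμ.trans hΛν.le) hfx0

/-- Let `Λ` be a moment functional on `H_q(E)` with finitely atomic representing measure
`ν = M₀ δ_{x₀} + ∑_{j=1}^k M_j δ_{x_j}` (pairwise distinct atoms).  If some `f ∈ E` satisfies
`f ≥ 0` on `𝒳`, `f(x₀) > 0` and `f(x₁) = ⋯ = f(x_k) = 0`, then `M₀` is the largest mass of `Λ`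
at `x₀`:  every representing measure `μ` of `Λ` satisfies `μ({x₀}) ⪯ M₀`. -/
theorem largest_mass_of_separating_function (E : Submodule ℝ (X → ℝ))
    (hfin : FiniteDimensional ℝ E)
    (Λ : (X → Matrix (Fin q) (Fin q) ℂ) → ℝ)
    (k : ℕ) (x : Fin (k + 1) → X) (hx : Function.Injective x)
    (M : Fin (k + 1) → Matrix (Fin q) (Fin q) ℂ) (hM : ∀ j, (M j).PosSemidef)
    (hν : ∀ F ∈ HqESet E q, Λ F = ∑ j, ((F (x j)) * (M j)).trace.re)
    (f : X → ℝ) (hfE : f ∈ E) (hf0 : ∀ y, 0 ≤ f y)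
    (hfx0 : 0 < f (x 0)) (hfz : ∀ j, j ≠ 0 → f (x j) = 0)
    (μ : X →₀ Matrix (Fin q) (Fin q) ℂ) (hμpsd : ∀ y, (μ y).PosSemidef)
    (hμ : ∀ F ∈ HqESet E q, Λ F = μ.sum fun y N => ((F y) * N).trace.re) :
    (M 0 - μ (x 0)).PosSemidef :=
  largest_mass_of_separating_function_general E Λ k x M hM hν f hfE hf0 hfx0 hfz μ hμpsd hμ
end

section
/- Let L be a nonzero matrix moment functional on E with L(f)L(g) = L(g)L(f) for all f,g ∈ E. Then there exist a unitary matrix U ∈ M_q(ℂ) and scalar moment functionals l₁,…,l_q on E such that L(f) = U*·diag(l₁(f),…,l_q(f))·U for all f ∈ E. -/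
/-! The matrices `L f` are Hermitian, being real combinations of positive semidefinite masses, and
they commute, so a single unitary `W` diagonalizes all of them. The `r`-th diagonal entry
`f ↦ ⟪w_r, L f w_r⟫` along the `r`-th column `w_r` of `W` is real-linear in `f`, and it is
represented by the nonnegative masses `⟪w_r, μ({x}) w_r⟫`. -/

open Matrix
open scoped ComplexOrder

variable {X : Type*} {q : ℕ}

/-- `μ` is a (finitely atomic) representing measure of the linear map `L : E → H_q`:
all masses are positive semidefinite and `L(f) = ∫ f dμ = ∑_x f(x) μ({x})`. -/
def IsMatRepMeasure (E : Submodule ℝ (X → ℝ)) (L : E →ₗ[ℝ] Matrix (Fin q) (Fin q) ℂ)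
    (μ : X →₀ Matrix (Fin q) (Fin q) ℂ) : Prop :=
  (∀ x, (μ x).PosSemidef) ∧ ∀ f : E, L f = μ.sum fun x M => ((f : X → ℝ) x) • M

/-- `l : E → ℝ` is a scalar moment functional:  it has a finitely atomic representing measure
with nonnegative masses. -/
def IsScalarMomentFunctional (E : Submodule ℝ (X → ℝ)) (l : E →ₗ[ℝ] ℝ) : Prop :=
  ∃ w : X →₀ ℝ, (∀ x, 0 ≤ w x) ∧ ∀ f : E, l f = w.sum fun x c => (f : X → ℝ) x * c

open Module.End
open scoped Function

theorem LinearMap.IsSymmetric.exists_orthonormalBasis_eigenvectors_of_commute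
    {𝕜 F ι m : Type*} [RCLike 𝕜] [NormedAddCommGroup F] [InnerProductSpace 𝕜 F]
    [FiniteDimensional 𝕜 F] [Fintype m] (hm : Module.finrank 𝕜 F = Fintype.card m)
    {T : ι → Module.End 𝕜 F} (hT : ∀ i, (T i).IsSymmetric) (hC : Pairwise (Commute on T)) :
    ∃ B : OrthonormalBasis m 𝕜 F, ∀ j i, ∃ c : 𝕜, T i (B j) = c • B j := by
  classical
  let V (χ : ι → 𝕜) : Submodule 𝕜 F := ⨅ i, eigenspace (T i) (χ i)
  have hV : DirectSum.IsInternal V := directSum_isInternal_of_pairwise_commute hT hC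
  -- The joint eigenspaces are independent, so only finitely many of them are nonzero.
  let := hV.submodule_iSupIndep.fintypeNeBotOfFiniteDimensional
  have hV' : DirectSum.IsInternal fun χ : {χ // V χ ≠ ⊥} => V χ :=
    DirectSum.isInternal_ne_bot_iff.mpr hV
  have hO : OrthogonalFamily 𝕜 (fun χ : {χ // V χ ≠ ⊥} => V χ) fun χ => (V χ).subtypeₗᵢ :=
    (orthogonalFamily_iInf_eigenspaces hT).comp Subtype.val_injective
  refine ⟨(hV'.subordinateOrthonormalBasis hm hO).reindex (Fintype.equivFin m).symm, fun j i => ?_⟩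
  have hj := hV'.subordinateOrthonormalBasis_subordinate hm (Fintype.equivFin m j) hO
  rw [OrthonormalBasis.reindex_apply, Equiv.symm_symm]
  exact ⟨_, mem_eigenspace_iff.mp ((Submodule.mem_iInf _).mp hj i)⟩

theorem Matrix.exists_unitary_isDiag_conj_of_commute {𝕜 n ι : Type*} [RCLike 𝕜] [Fintype n]
    [DecidableEq n] {A : ι → Matrix n n 𝕜} (hA : ∀ i, (A i).IsHermitian)
    (hC : Pairwise (Commute on A)) :
    ∃ W ∈ unitaryGroup n 𝕜, ∀ i, (Wᴴ * A i * W).IsDiag := by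
  have hS (i : ι) : (toEuclideanLin (A i)).IsSymmetric := isSymmetric_toEuclideanLin_iff.mpr (hA i)
  have hC' : Pairwise (Commute on fun i => toEuclideanLin (A i)) := fun i j hij =>
    show Commute (toEuclideanLin (A i)) (toEuclideanLin (A j)) from
      (hC hij).map (toLpLinAlgEquiv 2)
  obtain ⟨B, hB⟩ := LinearMap.IsSymmetric.exists_orthonormalBasis_eigenvectors_of_commute
    (finrank_euclideanSpace (𝕜 := 𝕜) (ι := n)) hS hC'
  obtain ⟨W, hW, hWcol⟩ : ∃ W ∈ unitaryGroup n 𝕜, ∀ j, W *ᵥ Pi.single j 1 = B j :=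
    ⟨_, (EuclideanSpace.basisFun n 𝕜).toMatrix_orthonormalBasis_mem_unitary B,
      fun j => by rw [mulVec_single_one]; rfl⟩
  refine ⟨W, hW, fun i a c hac => ?_⟩
  obtain ⟨χ, hχ⟩ := hB c i
  have hAB : A i *ᵥ B c = χ • B c := by
    simpa only [toLpLin_apply, WithLp.ofLp_smul] using congr(WithLp.ofLp $hχ)
  have hcol : (star W * A i * W) *ᵥ Pi.single c 1 = χ • Pi.single c 1 := by
    rw [← mulVec_mulVec, hWcol, ← mulVec_mulVec, hAB, mulVec_smul, ← hWcol c, mulVec_mulVec,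
      hW.1, one_mulVec]
  have h := congr_fun hcol a
  rwa [mulVec_single_one, col_apply, Pi.smul_apply, Pi.single_eq_of_ne hac, smul_zero,
    star_eq_conjTranspose] at h

theorem Matrix.IsHermitian.eq_diagonal_re_of_isDiag {𝕜 n : Type*} [RCLike 𝕜] [DecidableEq n]
    {D : Matrix n n 𝕜} (hD : D.IsHermitian) (hdiag : D.IsDiag) :
    D = diagonal fun j => (RCLike.re (D j j) : 𝕜) := by
  conv_lhs => rw [← hdiag.diagonal_diag, ← hD.coe_re_diag]
  rfl

def Matrix.reDiagConj {n : Type*} [Fintype n] (W : Matrix n n ℂ) (j : n) :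
    Matrix n n ℂ →ₗ[ℝ] ℝ where
  toFun M := ((Wᴴ * M * W) j j).re
  map_add' M N := by simp [mul_add, add_mul]
  map_smul' c M := by simp

theorem Matrix.PosSemidef.reDiagConj_nonneg {n : Type*} [Fintype n] {M : Matrix n n ℂ}
    (hM : M.PosSemidef) (W : Matrix n n ℂ) (j : n) : 0 ≤ reDiagConj W j M :=
  (Complex.nonneg_iff.mp (hM.conjTranspose_mul_mul_same W).diag_nonneg).1

namespace IsMatRepMeasure

variable {E : Submodule ℝ (X → ℝ)} {L : E →ₗ[ℝ] Matrix (Fin q) (Fin q) ℂ}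
  {μ : X →₀ Matrix (Fin q) (Fin q) ℂ}

theorem isHermitian (hμ : IsMatRepMeasure E L μ) (f : E) : (L f).IsHermitian := by
  rw [hμ.2 f]
  exact isSelfAdjoint_sum _ fun x _ => (hμ.1 x).1.smul (IsSelfAdjoint.all _)

theorem isScalarMomentFunctional_comp (hμ : IsMatRepMeasure E L μ)
    (Φ : Matrix (Fin q) (Fin q) ℂ →ₗ[ℝ] ℝ) (hΦ : ∀ M, M.PosSemidef → 0 ≤ Φ M) :
    IsScalarMomentFunctional E (Φ ∘ₗ L) := by
  refine ⟨μ.mapRange Φ Φ.map_zero, fun x => hΦ _ (hμ.1 x), fun f => ?_⟩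
  rw [LinearMap.comp_apply, hμ.2 f, map_finsuppSum, Finsupp.sum_mapRange_index fun _ => by simp]
  simp

end IsMatRepMeasure

theorem commutative_matMomentFunctional_diagonalizable_general (E : Submodule ℝ (X → ℝ))
    (L : E →ₗ[ℝ] Matrix (Fin q) (Fin q) ℂ)
    (hL : ∃ μ, IsMatRepMeasure E L μ)
    (hcomm : ∀ f g : E, L f * L g = L g * L f) :
    ∃ U ∈ Matrix.unitaryGroup (Fin q) ℂ, ∃ l : Fin q → (E →ₗ[ℝ] ℝ),
      (∀ r, IsScalarMomentFunctional E (l r)) ∧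
      ∀ f : E, L f = Uᴴ * Matrix.diagonal (fun r => (l r f : ℂ)) * U := by
  obtain ⟨μ, hμ⟩ := hL
  obtain ⟨W, hW, hdiag⟩ := exists_unitary_isDiag_conj_of_commute (A := fun f : E => L f)
    hμ.isHermitian fun f g _ => hcomm f g
  refine ⟨Wᴴ, star_eq_conjTranspose W ▸ Unitary.star_mem hW, fun r => reDiagConj W r ∘ₗ L,
    fun r => hμ.isScalarMomentFunctional_comp _ fun M hM => hM.reDiagConj_nonneg W r, fun f => ?_⟩
  have hD := (isHermitian_conjTranspose_mul_mul W (hμ.isHermitian f)).eq_diagonal_re_of_isDiag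
    (hdiag f)
  have hWW : W * Wᴴ = 1 := hW.2
  calc L f = W * (Wᴴ * L f * W) * Wᴴ := by
        simp only [← mul_assoc, hWW, one_mul]
        rw [mul_assoc, hWW, mul_one]
    _ = _ := by rw [hD, conjTranspose_conjTranspose]; rfl

/-- A nonzero matrix moment functional `L` on `E` with `L(f)L(g) = L(g)L(f)` for all
`f, g ∈ E` is diagonalizable:  there exist a unitary `U` and scalar moment functionals
`l₁, …, l_q` with `L(f) = U* · diag(l₁(f),…,l_q(f)) · U` for all `f ∈ E`. -/
theorem commutative_matMomentFunctional_diagonalizable (E : Submodule ℝ (X → ℝ))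
    (hfin : FiniteDimensional ℝ E)
    (L : E →ₗ[ℝ] Matrix (Fin q) (Fin q) ℂ)
    (hL : ∃ μ, IsMatRepMeasure E L μ) (hL0 : L ≠ 0)
    (hcomm : ∀ f g : E, L f * L g = L g * L f) :
    ∃ U ∈ Matrix.unitaryGroup (Fin q) ℂ, ∃ l : Fin q → (E →ₗ[ℝ] ℝ),
      (∀ r, IsScalarMomentFunctional E (l r)) ∧
      ∀ f : E, L f = Uᴴ * Matrix.diagonal (fun r => (l r f : ℂ)) * U :=
  commutative_matMomentFunctional_diagonalizable_general E L hL hcomm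
end

section
/- A nonzero matrix moment functional L on E is diagonalizable (unitarily equivalent to a direct sum of scalar moment functionals) if and only if L has a finitely atomic representing measure ν = Σ_{j=1}^k M_jδ_{x_j} whose masses pairwise commute: M_iM_j = M_jM_i for all i,j. -/
open Matrix
open scoped ComplexOrder

variable {X : Type*} {q : ℕ}

/-- `L` is diagonalizable:  unitarily equivalent to a direct sum of scalar moment
functionals. -/
def Diagonalizable (E : Submodule ℝ (X → ℝ)) (L : E →ₗ[ℝ] Matrix (Fin q) (Fin q) ℂ) : Prop :=
  ∃ U ∈ Matrix.unitaryGroup (Fin q) ℂ, ∃ l : Fin q → (E →ₗ[ℝ] ℝ),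
    (∀ r, IsScalarMomentFunctional E (l r)) ∧
    ∀ f : E, L f = Uᴴ * Matrix.diagonal (fun r => (l r f : ℂ)) * U

/-!
If `L f = Uᴴ diag(l₁ f, …, l_q f) U` and `l_r` is represented by the atomic measure `w_r`, then `L`
is represented by the atomic measure `x ↦ Uᴴ diag(w₁ x, …, w_q x) U`, whose masses commute since
they are all diagonalized by the same `U`. Conversely, commuting positive semidefinite masses are
Hermitian, so they are simultaneously unitarily diagonalizable (a common orthonormal eigenbasis of
commuting self-adjoint operators); their eigenvalues are nonnegative and, read off coordinate by
coordinate, give the atomic measures of the scalar functionals `l_r`.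
-/

open Function Module.End

theorem LinearMap.IsSymmetric.exists_orthonormalBasis_common_eigenvectors
    {𝕜 E ι : Type*} [RCLike 𝕜] [NormedAddCommGroup E] [InnerProductSpace 𝕜 E]
    [FiniteDimensional 𝕜 E] {n : ℕ} (hn : Module.finrank 𝕜 E = n) {T : ι → E →ₗ[𝕜] E}
    (hT : ∀ i, (T i).IsSymmetric) (hC : Pairwise (Commute on T)) :
    ∃ (b : OrthonormalBasis (Fin n) 𝕜 E) (d : ι → Fin n → 𝕜),
      ∀ i r, T i (b r) = d i r • b r := by
  classical
  let V (χ : ι → 𝕜) : Submodule 𝕜 E := ⨅ i, eigenspace (T i) (χ i)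
  have hV : DirectSum.IsInternal V := directSum_isInternal_of_pairwise_commute hT hC
  -- the index type of the decomposition must be finite: keep only the nonzero joint eigenspaces
  let _ : Fintype {χ // V χ ≠ ⊥} := hV.submodule_iSupIndep.fintypeNeBotOfFiniteDimensional
  have hV' : DirectSum.IsInternal fun χ : {χ // V χ ≠ ⊥} => V χ :=
    DirectSum.isInternal_ne_bot_iff.2 hV
  have hO : OrthogonalFamily 𝕜 (fun χ : {χ // V χ ≠ ⊥} => V χ) fun χ => (V χ).subtypeₗᵢ :=
    (orthogonalFamily_iInf_eigenspaces hT).comp Subtype.val_injective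
  refine ⟨hV'.subordinateOrthonormalBasis hn hO,
    fun i r => (hV'.subordinateOrthonormalBasisIndex hn r hO).1 i, fun i r => ?_⟩
  exact mem_eigenspace_iff.1
    ((Submodule.mem_iInf _).1 (hV'.subordinateOrthonormalBasis_subordinate hn r hO) i)

theorem Matrix.exists_unitary_conj_isDiag_of_commute {𝕜 n ι : Type*} [RCLike 𝕜] [Fintype n]
    [DecidableEq n] {M : ι → Matrix n n 𝕜} (hM : ∀ i, (M i).IsHermitian)
    (hC : Pairwise (Commute on M)) :
    ∃ U ∈ unitaryGroup n 𝕜, ∀ i, (U * M i * star U).IsDiag := by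
  have hC' : Pairwise (Commute on fun i => toEuclideanLin (M i)) :=
    fun i j hij => (hC hij).map (toLpLinAlgEquiv 2)
  obtain ⟨b, d, hb⟩ := LinearMap.IsSymmetric.exists_orthonormalBasis_common_eigenvectors
    (finrank_euclideanSpace (𝕜 := 𝕜) (ι := n))
    (fun i => isSymmetric_toEuclideanLin_iff.2 (hM i)) hC'
  let e : Fin (Fintype.card n) ≃ n := (Fintype.equivFin n).symm
  let b' : OrthonormalBasis n 𝕜 (EuclideanSpace 𝕜 n) := b.reindex e
  let V : Matrix n n 𝕜 := (EuclideanSpace.basisFun n 𝕜).toBasis.toMatrix b'.toBasis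
  have hV : V ∈ unitaryGroup n 𝕜 :=
    (EuclideanSpace.basisFun n 𝕜).toMatrix_orthonormalBasis_mem_unitary b'
  have hMV : ∀ i, M i * V = V * diagonal (fun j => d i (e.symm j)) := by
    intro i
    ext r j
    have hbj := congr(WithLp.ofLp $(hb i (e.symm j)) r)
    rw [mul_diagonal, mul_comm (V r j)]
    simpa [V, b', mul_apply, mulVec, dotProduct, Module.Basis.toMatrix_apply] using hbj
  refine ⟨star V, Unitary.star_mem hV, fun i => ?_⟩
  rw [star_star, Matrix.mul_assoc, hMV, ← Matrix.mul_assoc, Unitary.star_mul_self_of_mem hV,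
    Matrix.one_mul]
  exact isDiag_diagonal _

theorem Matrix.IsHermitian.diagonal_re_diag_of_isDiag {𝕜 n : Type*} [RCLike 𝕜] [DecidableEq n]
    {A : Matrix n n 𝕜} (hA : A.IsHermitian) (hd : A.IsDiag) :
    diagonal (fun i => (RCLike.re (A i i) : 𝕜)) = A := by
  conv_rhs => rw [← hd.diagonal_diag, ← hA.coe_re_diag]
  rfl

section ConjDiagMeasure

variable {n : Type*} [Fintype n] [DecidableEq n]

open Classical in
noncomputable def conjDiagMeasure (U : Matrix n n ℂ) (w : n → X →₀ ℝ) : X →₀ Matrix n n ℂ :=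
  Finsupp.onFinset (Finset.univ.biUnion fun r => (w r).support)
    (fun x => Uᴴ * diagonal (fun r => (w r x : ℂ)) * U) fun x hx => by
      contrapose! hx
      have hw : ∀ r, w r x = 0 := by simpa using hx
      simp [hw]

theorem conjDiagMeasure_apply (U : Matrix n n ℂ) (w : n → X →₀ ℝ) (x : X) :
    conjDiagMeasure U w x = Uᴴ * diagonal (fun r => (w r x : ℂ)) * U :=
  rfl

open Classical in
theorem conjDiagMeasure_sum_smul (U : Matrix n n ℂ) (w : n → X →₀ ℝ) (g : X → ℝ) :
    (conjDiagMeasure U w).sum (fun x M => g x • M) =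
      Uᴴ * diagonal (fun r => (((w r).sum fun x c => g x * c : ℝ) : ℂ)) * U := by
  set s := Finset.univ.biUnion fun r => (w r).support
  have hw : ∀ r, (((w r).sum fun x c => g x * c : ℝ) : ℂ) = ∑ x ∈ s, g x • (w r x : ℂ) := by
    intro r
    rw [Finsupp.sum_of_support_subset (w r)
      (Finset.subset_biUnion_of_mem (fun r => (w r).support) (Finset.mem_univ r)) _
      fun _ _ => mul_zero _]
    push_cast
    simp only [s, Complex.real_smul]
  calc (conjDiagMeasure U w).sum (fun x M => g x • M)
      = ∑ x ∈ s, g x • (Uᴴ * diagonalLinearMap n ℝ ℂ (fun r => (w r x : ℂ)) * U) :=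
        Finsupp.sum_of_support_subset _ Finsupp.support_onFinset_subset _ fun _ _ => smul_zero _
    _ = Uᴴ * diagonalLinearMap n ℝ ℂ (∑ x ∈ s, g x • fun r => (w r x : ℂ)) * U := by
        simp only [map_sum, map_smul, Matrix.mul_sum, Matrix.sum_mul, Matrix.mul_smul,
          Matrix.smul_mul]
    _ = _ := by simp only [hw, Finset.sum_fn, Pi.smul_apply]; rfl

theorem posSemidef_conjDiagMeasure_apply (U : Matrix n n ℂ) {w : n → X →₀ ℝ}
    (hw : ∀ r x, 0 ≤ w r x) (x : X) : (conjDiagMeasure U w x).PosSemidef :=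
  (posSemidef_diagonal_iff.2 fun r => by exact_mod_cast hw r x).conjTranspose_mul_mul_same U

theorem commute_conjDiagMeasure_apply {U : Matrix n n ℂ} (hU : U ∈ unitaryGroup n ℂ)
    (w : n → X →₀ ℝ) (x y : X) : Commute (conjDiagMeasure U w x) (conjDiagMeasure U w y) := by
  have := (commute_diagonal (fun r => (w r x : ℂ)) (fun r => (w r y : ℂ))).map
    (Unitary.conjStarAlgAut ℂ (Matrix n n ℂ) (star ⟨U, hU⟩))
  simpa [conjDiagMeasure_apply, star_eq_conjTranspose] using this

theorem exists_eq_conjDiagMeasure_of_commute {μ : X →₀ Matrix n n ℂ}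
    (hμ : ∀ x, (μ x).PosSemidef) (hcomm : ∀ x y, Commute (μ x) (μ y)) :
    ∃ U ∈ unitaryGroup n ℂ, ∃ w : n → X →₀ ℝ, (∀ r x, 0 ≤ w r x) ∧ μ = conjDiagMeasure U w := by
  obtain ⟨U, hU, hdiag⟩ := exists_unitary_conj_isDiag_of_commute (fun x => (hμ x).isHermitian)
    fun x y _ => hcomm x y
  have hD : ∀ x, (U * μ x * star U).PosSemidef := fun x => (hμ x).mul_mul_conjTranspose_same U
  refine ⟨U, hU, fun r => μ.mapRange (fun M => ((U * M * star U) r r).re) (by simp),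
    fun r x => ?_, ?_⟩
  · exact (Complex.nonneg_iff.1 ((hD x).diag_nonneg (i := r))).1
  ext1 x
  have hDx : diagonal (fun r => (((U * μ x * star U) r r).re : ℂ)) = U * μ x * star U :=
    (hD x).isHermitian.diagonal_re_diag_of_isDiag (hdiag x)
  have hUU : star U * U = 1 := Unitary.star_mul_self_of_mem hU
  calc μ x = (star U * U) * μ x * (star U * U) := by rw [hUU, Matrix.one_mul, Matrix.mul_one]
    _ = star U * (U * μ x * star U) * U := by simp only [Matrix.mul_assoc]
    _ = conjDiagMeasure U _ x := by rw [← hDx, star_eq_conjTranspose]; rfl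

end ConjDiagMeasure

noncomputable def momentFunctional (E : Submodule ℝ (X → ℝ)) (w : X →₀ ℝ) : E →ₗ[ℝ] ℝ where
  toFun f := w.sum fun x c => (f : X → ℝ) x * c
  map_add' f g := by simp only [Submodule.coe_add, Pi.add_apply, add_mul, Finsupp.sum_add]
  map_smul' a f := by
    simp only [Submodule.coe_smul, Pi.smul_apply, smul_eq_mul, mul_assoc, RingHom.id_apply,
      Finsupp.mul_sum]

theorem diagonalizable_iff_exists_conjDiagMeasure (E : Submodule ℝ (X → ℝ))
    (L : E →ₗ[ℝ] Matrix (Fin q) (Fin q) ℂ) :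
    Diagonalizable E L ↔ ∃ U ∈ unitaryGroup (Fin q) ℂ, ∃ w : Fin q → X →₀ ℝ,
      (∀ r x, 0 ≤ w r x) ∧
        ∀ f : E, L f = (conjDiagMeasure U w).sum fun x M => (f : X → ℝ) x • M := by
  simp only [Diagonalizable, conjDiagMeasure_sum_smul]
  constructor
  · rintro ⟨U, hU, l, hl, hL⟩
    choose w hw hlw using hl
    exact ⟨U, hU, w, hw, fun f => by simp only [hL f, hlw]⟩
  · rintro ⟨U, hU, w, hw, hL⟩
    exact ⟨U, hU, fun r => momentFunctional E (w r), fun r => ⟨w r, hw r, fun f => rfl⟩, hL⟩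

theorem diagonalizable_iff_commuting_masses_general (E : Submodule ℝ (X → ℝ))
    (L : E →ₗ[ℝ] Matrix (Fin q) (Fin q) ℂ) :
    Diagonalizable E L ↔
      ∃ μ, IsMatRepMeasure E L μ ∧ ∀ x y : X, μ x * μ y = μ y * μ x := by
  rw [diagonalizable_iff_exists_conjDiagMeasure]
  constructor
  · rintro ⟨U, hU, w, hw, hL⟩
    exact ⟨conjDiagMeasure U w, ⟨posSemidef_conjDiagMeasure_apply U hw, hL⟩,
      commute_conjDiagMeasure_apply hU w⟩
  · rintro ⟨μ, ⟨hμ, hL⟩, hcomm⟩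
    obtain ⟨U, hU, w, hw, rfl⟩ := exists_eq_conjDiagMeasure_of_commute hμ hcomm
    exact ⟨U, hU, w, hw, hL⟩

/-- A nonzero matrix moment functional `L` on `E` is diagonalizable if and only if it has a
finitely atomic representing measure whose masses pairwise commute. -/
theorem diagonalizable_iff_commuting_masses (E : Submodule ℝ (X → ℝ))
    (hfin : FiniteDimensional ℝ E)
    (L : E →ₗ[ℝ] Matrix (Fin q) (Fin q) ℂ)
    (hL : ∃ μ, IsMatRepMeasure E L μ) (hL0 : L ≠ 0) :
    Diagonalizable E L ↔
      ∃ μ, IsMatRepMeasure E L μ ∧ ∀ x y : X, μ x * μ y = μ y * μ x :=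
  diagonalizable_iff_commuting_masses_general E L
end
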